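/- arXiv:1608.05658 — 3 statements merged into one kernel-verified Lean document; each statement's English description precedes it below -/
import Mathlib

section
/- For every real t > 0, both eigenvalues of the 2×2 symmetric matrix A(t) with diagonal entries 1 - t·e^{-t}/(1 - e^{-t}) and off-diagonal entries e^{-t/2}·(1 - t/(1 - e^{-t})) are the values (1 - e^{-t} - t·e^{-t/2})/(1 - e^{-t/2}) and (1 - e^{-t} + t·e^{-t/2})/(1 + e^{-t/2}), and both are strictly positive. -/
theorem eigenvalues_of_correlation_matrix (t : ℝ) (ht : 0 < t)
    (a b lam₁ lam₂ : ℝ)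
    (ha : a = 1 - t * Real.exp (-t) / (1 - Real.exp (-t)))
    (hb : b = Real.exp (-t / 2) * (1 - t / (1 - Real.exp (-t))))
    (hl₁ : lam₁ = (1 - Real.exp (-t) - t * Real.exp (-t / 2)) / (1 - Real.exp (-t / 2)))
    (hl₂ : lam₂ = (1 - Real.exp (-t) + t * Real.exp (-t / 2)) / (1 + Real.exp (-t / 2)))
    (A : Matrix (Fin 2) (Fin 2) ℝ) (hA : A = !![a, b; b, a]) :
    A.mulVec ![1, 1] = lam₁ • ![1, 1] ∧ A.mulVec ![1, -1] = lam₂ • ![1, -1] ∧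
      0 < lam₁ ∧ 0 < lam₂ := by
  set e := Real.exp (-t / 2) with he
  have hesq : Real.exp (-t) = e * e := by
    rw [he, ← Real.exp_add]; ring_nf
  have he0 : 0 < e := Real.exp_pos _
  have he1 : e < 1 := by
    rw [he]; exact Real.exp_lt_one_iff.mpr (by linarith)
  have hne1 : (1 : ℝ) - e ≠ 0 := by linarith
  have hne2 : (1 : ℝ) + e ≠ 0 := by linarith
  have hneq : (1 : ℝ) - Real.exp (-t) ≠ 0 := by
    rw [hesq]; nlinarith
  -- key inequality: t * e < 1 - e^2
  have hkey : t * e < 1 - e * e := by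
    have hs : t / 2 < Real.sinh (t / 2) := Real.self_lt_sinh_iff.mpr (by linarith)
    rw [Real.sinh_eq] at hs
    have hexp : Real.exp (-(t / 2)) = e := by rw [he]; ring_nf
    have h2 : t < Real.exp (t / 2) - e := by rw [← hexp]; linarith
    have h3 : Real.exp (t / 2) * e = 1 := by
      rw [he, ← Real.exp_add]; ring_nf; exact Real.exp_zero
    nlinarith
  have hab1 : a + b = lam₁ := by
    rw [ha, hb, hl₁, hesq]
    have hsq : (1:ℝ) - e ^ 2 ≠ 0 := by nlinarith
    have hsq2 : (1:ℝ) - e * e ≠ 0 := by nlinarith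
    field_simp [hsq, hsq2]
    ring
  have hab2 : a - b = lam₂ := by
    rw [ha, hb, hl₂, hesq]
    have hsq : (1:ℝ) - e ^ 2 ≠ 0 := by nlinarith
    have hsq2 : (1:ℝ) - e * e ≠ 0 := by nlinarith
    field_simp [hsq, hsq2]
    ring
  refine ⟨?_, ?_, ?_, ?_⟩
  · subst hA
    funext i
    fin_cases i <;> simp [Matrix.mulVec, dotProduct] <;> linarith
  · subst hA
    funext i
    fin_cases i <;> simp [Matrix.mulVec, dotProduct] <;> linarith
  · rw [hl₁, hesq]
    apply div_pos <;> nlinarith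
  · rw [hl₂, hesq]
    apply div_pos <;> nlinarith
end

section
/- The function f(t) = (1 - e^{-t/2})/(1 - e^{-t} - t·e^{-t/2}) is decreasing on (0, +∞). -/
open Real Set

lemma exp_half_deriv (t : ℝ) :
    HasDerivAt (fun t : ℝ => exp (-t / 2)) (exp (-t / 2) * (-1 / 2)) t := by
  have h : HasDerivAt (fun t : ℝ => -t / 2) (-1 / 2) t := by
    simpa using (hasDerivAt_id t).neg.div_const 2
  simpa using h.exp

lemma exp_neg_deriv (t : ℝ) :
    HasDerivAt (fun t : ℝ => exp (-t)) (exp (-t) * (-1)) t := by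
  simpa using ((hasDerivAt_id t).neg).exp

lemma exp_neg_sq (t : ℝ) : exp (-t) = exp (-t / 2) ^ 2 := by
  rw [← Real.exp_nat_mul]
  push_cast
  ring_nf

lemma D_pos {t : ℝ} (ht : 0 < t) : 0 < 1 - exp (-t) - t * exp (-t / 2) := by
  have h := Real.self_lt_sinh_iff.mpr (by linarith : 0 < t / 2)
  rw [Real.sinh_eq] at h
  have h1 : exp (-(t / 2)) = exp (-t / 2) := by rw [neg_div]
  have h2 : exp (t / 2) * exp (-t / 2) = 1 := by
    rw [← Real.exp_add, ← Real.exp_zero]; ring_nf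
  have h3 := exp_neg_sq t
  have hp : 0 < exp (-t / 2) := Real.exp_pos _
  rw [h1] at h
  nlinarith [mul_lt_mul_of_pos_right h hp]

lemma g_deriv (t : ℝ) :
    HasDerivAt (fun t : ℝ => 3 - 4 * exp (-t / 2) + exp (-t) - t)
      (2 * exp (-t / 2) - exp (-t) - 1) t := by
  have h := ((((exp_half_deriv t).const_mul 4).const_sub 3).add (exp_neg_deriv t)).sub
    (hasDerivAt_id t)
  convert h using 1
  · rfl
  · rfl
  · rfl
  · ring

lemma g_neg {t : ℝ} (ht : 0 < t) : 3 - 4 * exp (-t / 2) + exp (-t) - t < 0 := by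
  have hanti : StrictAntiOn (fun t : ℝ => 3 - 4 * exp (-t / 2) + exp (-t) - t) (Ici 0) := by
    apply strictAntiOn_of_deriv_neg (convex_Ici 0)
    · fun_prop
    · intro x hx
      rw [interior_Ici] at hx
      rw [(g_deriv x).deriv]
      have hx1 : exp (-x / 2) < 1 := by
        rw [Real.exp_lt_one_iff]; linarith [hx.out]
      have hsq := exp_neg_sq x
      nlinarith [sq_nonneg (exp (-x / 2) - 1)]
  have := hanti (self_mem_Ici) (le_of_lt ht : (0:ℝ) ≤ t) ht
  norm_num at this
  linarith

theorem f_strictAnti :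
    StrictAntiOn
      (fun t : ℝ => (1 - Real.exp (-t / 2)) / (1 - Real.exp (-t) - t * Real.exp (-t / 2)))
      (Set.Ioi 0) := by
  apply strictAntiOn_of_deriv_neg (convex_Ioi 0)
  · apply ContinuousOn.div
    · fun_prop
    · fun_prop
    · intro x hx
      exact ne_of_gt (D_pos hx)
  · intro t ht
    rw [interior_Ioi] at ht
    have ht' : (0:ℝ) < t := ht
    have hD := D_pos ht'
    have hN : HasDerivAt (fun t : ℝ => 1 - exp (-t / 2)) (-(exp (-t / 2) * (-1 / 2))) t :=
      (exp_half_deriv t).const_sub 1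
    have hDd : HasDerivAt (fun t : ℝ => 1 - exp (-t) - t * exp (-t / 2))
        ((-(exp (-t) * (-1))) - (1 * exp (-t / 2) + t * (exp (-t / 2) * (-1 / 2)))) t :=
      ((exp_neg_deriv t).const_sub 1).sub ((hasDerivAt_id t).mul (exp_half_deriv t))
    have hf := hN.div hDd (ne_of_gt hD)
    rw [show deriv (fun t : ℝ => (1 - exp (-t / 2)) / (1 - exp (-t) - t * exp (-t / 2))) t = _ from hf.deriv]
    apply div_neg_of_neg_of_pos _ (by positivity)
    have hg := g_neg ht'
    have hsq := exp_neg_sq t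
    have hp : 0 < exp (-t / 2) := Real.exp_pos _
    have key : -(exp (-t / 2) * (-1 / 2)) * (1 - exp (-t) - t * exp (-t / 2)) -
        (1 - exp (-t / 2)) *
          ((-(exp (-t) * (-1))) - (1 * exp (-t / 2) + t * (exp (-t / 2) * (-1 / 2)))) =
        exp (-t / 2) / 2 * (3 - 4 * exp (-t / 2) + exp (-t) - t) := by
      rw [hsq]; ring
    rw [key]
    exact mul_neg_of_pos_of_neg (by positivity) hg
end

section
/- For every real t > 0, one has (1 + e^{-t/2})/(1 - e^{-t} + t·e^{-t/2}) ≤ f(t), where f(t) = (1 - e^{-t/2})/(1 - e^{-t} - t·e^{-t/2}). -/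
theorem inv_large_eigenvalue_le_f (t : ℝ) (ht : 0 < t) :
    (1 + Real.exp (-t / 2)) / (1 - Real.exp (-t) + t * Real.exp (-t / 2)) ≤
      (1 - Real.exp (-t / 2)) / (1 - Real.exp (-t) - t * Real.exp (-t / 2)) := by
  have he : Real.exp (-t) = Real.exp (-t / 2) * Real.exp (-t / 2) := by
    rw [← Real.exp_add]; ring_nf
  set e := Real.exp (-t / 2) with hedef
  have hepos : 0 < e := Real.exp_pos _
  have hsinh := Real.self_lt_sinh_iff.mpr (by linarith : (0:ℝ) < t / 2)
  rw [Real.sinh_eq] at hsinh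
  have hinv : Real.exp (t / 2) = e⁻¹ := by
    rw [hedef, ← Real.exp_neg]; ring_nf
  have hinv' : e * e⁻¹ = 1 := mul_inv_cancel₀ (ne_of_gt hepos)
  have hneg : Real.exp (-(t / 2)) = e := by rw [hedef]; ring_nf
  rw [hinv, hneg] at hsinh
  have ht' : t < e⁻¹ - e := by linarith
  have hD : 0 < 1 - Real.exp (-t) - t * e := by
    rw [he]; nlinarith [mul_lt_mul_of_pos_left ht' hepos]
  have hD2 : 0 < 1 - Real.exp (-t) + t * e := by nlinarith
  rw [div_le_div_iff₀ hD2 hD]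
  have hlin : 1 - t ≤ Real.exp (-t) := by linarith [Real.add_one_le_exp (-t)]
  nlinarith [he, hepos]
end
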